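/- arXiv:2304.02128 — 7 statements merged into one kernel-verified Lean document; each statement's English description precedes it below -/
import Mathlib

section
/- Let m ≥ 2 and λ₁, …, λ_r be positive integers with 1 ≤ λ_i < m, let λ₀ = Σ λ_i, and assume gcd(m, λ₀) = 1. Then the cardinality of the set G = { mj − iλ₀ : 1 ≤ i ≤ m−1, ⌈iλ₀/m⌉ ≤ j ≤ (Σ_{ℓ=1}^r ⌈iλ_ℓ/m⌉) − 1 } equals (m(r−1) + 1 − Σ_{ℓ=1}^r gcd(m, λ_ℓ))/2. -/
/-!
The blocks `{m j - i λ₀ : j}` for different `i ∈ [1, m)` are disjoint, since `m ∤ (i - i') λ₀`, and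
block `i` has `∑ ℓ ⌈i λ_ℓ / m⌉ - ⌈i λ₀ / m⌉` elements. Hence `|G| = ∑ ℓ S(λ_ℓ) - S(λ₀)` with
`S(λ) = ∑_{i=1}^{m-1} ⌈i λ / m⌉`. Pairing `i` with `m - i` gives `⌈x⌉ + ⌈λ - x⌉ = λ + 1` unless
`x = i λ / m` is an integer, which happens for exactly `gcd(m, λ) - 1` values of `i`; so
`2 S(λ) = (m - 1)(λ + 1) - gcd(m, λ) + 1`, and `gcd(m, λ₀) = 1` gives the formula.
-/

open Finset

theorem Nat.dvd_mul_iff_div_gcd_dvd {m l : ℕ} (hm : 0 < m) (i : ℕ) :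
    m ∣ i * l ↔ m / m.gcd l ∣ i := by
  have hg : 0 < m.gcd l := Nat.gcd_pos_of_pos_left l hm
  rw [← dvd_mul_gcd_iff_dvd_mul]
  conv_rhs => rw [← Nat.mul_dvd_mul_iff_right hg, Nat.div_mul_cancel (Nat.gcd_dvd_left m l)]

theorem Nat.card_Ico_one_filter_dvd_mul {m : ℕ} (hm : 0 < m) (l : ℕ) :
    #{i ∈ Ico 1 m | m ∣ i * l} = m.gcd l - 1 := by
  set d := m / m.gcd l
  have hmd : m = m.gcd l * d := (Nat.mul_div_cancel' (Nat.gcd_dvd_left m l)).symm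
  have hd : 0 < d := Nat.pos_of_mul_pos_left (hmd ▸ hm)
  have hIco : Ico 1 m = Ioc 0 (m - 1) := by ext; simp only [mem_Ico, mem_Ioc]; omega
  simp_rw [hIco, Nat.dvd_mul_iff_div_gcd_dvd hm, Nat.Ioc_filter_dvd_card_eq_div]
  apply Nat.div_eq_of_lt_le
  · rw [Nat.sub_one_mul, ← hmd]; omega
  · rw [Nat.sub_add_cancel (Nat.gcd_pos_of_pos_left l hm), ← hmd]; omega

theorem Rat.ceil_sub_floor_natCast_div {m : ℕ} (hm : 0 < m) (n : ℕ) :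
    ⌈(n : ℚ) / m⌉ - ⌊(n : ℚ) / m⌋ = if m ∣ n then 0 else 1 := by
  rw [Rat.ceil_natCast_div_natCast, Rat.floor_natCast_div_natCast, Int.neg_ediv,
    Int.sign_natCast_of_ne_zero hm.ne']
  simp only [Int.natCast_dvd_natCast]
  ring

-- `⌈x⌉ + ⌈l - x⌉ = l + (⌈x⌉ - ⌊x⌋)` for `x = i l / m`.
theorem ceil_div_add_ceil_sub_div {m : ℕ} (hm : 0 < m) (l : ℕ) {i : ℕ} (hi : i ≤ m) :
    ⌈(i * l : ℚ) / m⌉ + ⌈((m - i : ℕ) * l : ℚ) / m⌉ = l + if m ∣ i * l then 0 else 1 := by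
  have hreflect : ((m - i : ℕ) * l : ℚ) / m = (l : ℤ) - (i * l : ℚ) / m := by
    push_cast [hi]; field_simp
  rw [hreflect, sub_eq_add_neg, Int.ceil_intCast_add, Int.ceil_neg,
    ← Rat.ceil_sub_floor_natCast_div hm]
  push_cast
  ring

theorem two_mul_sum_ceil_div {m : ℕ} (hm : 0 < m) (l : ℕ) :
    2 * ∑ i ∈ Ico 1 m, ⌈(i * l : ℚ) / m⌉ = (m - 1) * (l + 1) - m.gcd l + 1 := by
  have hreflect :
      ∑ i ∈ Ico 1 m, ⌈((m - i : ℕ) * l : ℚ) / m⌉ = ∑ i ∈ Ico 1 m, ⌈(i * l : ℚ) / m⌉ := by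
    have := sum_Ico_reflect (fun i => ⌈(i * l : ℚ) / m⌉) 1 (Nat.le_succ m)
    rwa [Nat.add_sub_cancel_left, Nat.add_sub_cancel] at this
  have hpairs : ∑ i ∈ Ico 1 m, (⌈(i * l : ℚ) / m⌉ + ⌈((m - i : ℕ) * l : ℚ) / m⌉) =
      ∑ i ∈ Ico 1 m, ((l : ℤ) + if m ∣ i * l then 0 else 1) :=
    sum_congr rfl fun i hi => ceil_div_add_ceil_sub_div hm l (mem_Ico.1 hi).2.le
  have hnot : (#{i ∈ Ico 1 m | ¬ m ∣ i * l} : ℤ) = m - m.gcd l := by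
    rw [filter_not, card_sdiff_of_subset (filter_subset _ _), Nat.card_Ico_one_filter_dvd_mul hm,
      Nat.card_Ico]
    have := Nat.gcd_le_left l hm
    have := Nat.gcd_pos_of_pos_left l hm
    omega
  rw [two_mul]
  nth_rw 2 [← hreflect]
  rw [← sum_add_distrib, hpairs, sum_add_distrib, sum_ite]
  simp only [sum_const_zero, sum_const, nsmul_eq_mul, mul_one, zero_add, Nat.card_Ico, hnot]
  push_cast [hm]
  ring

theorem Int.ceil_sum_le {ι R : Type*} [Ring R] [LinearOrder R] [FloorRing R] [IsOrderedRing R]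
    (s : Finset ι) (f : ι → R) : ⌈∑ i ∈ s, f i⌉ ≤ ∑ i ∈ s, ⌈f i⌉ :=
  Int.ceil_le.2 <| by push_cast; exact sum_le_sum fun i _ => Int.le_ceil (f i)

theorem Nat.Coprime.eq_of_mul_sub_mul_eq {m c : ℕ} (hc : m.Coprime c) {i i' : ℕ} (hi : i < m)
    (hi' : i' < m) {j j' : ℤ} (h : (m : ℤ) * j - i * c = m * j' - i' * c) : i = i' := by
  have hdvd : (m : ℤ) ∣ (i - i') * c := ⟨j - j', by linear_combination -h⟩
  have hdvd' := (Nat.isCoprime_iff_coprime.2 hc).dvd_of_dvd_mul_right hdvd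
  have := Int.eq_zero_of_abs_lt_dvd hdvd' (by rw [abs_lt]; omega)
  omega

theorem card_image_Icc_mul_sub {m : ℕ} (hm : 0 < m) (a : ℤ) {lo hi : ℤ} (h : lo ≤ hi) :
    (#((Icc lo (hi - 1)).image fun j => (m : ℤ) * j - a) : ℤ) = hi - lo := by
  have hinj : Function.Injective fun j : ℤ => (m : ℤ) * j - a := fun j j' hj =>
    mul_left_cancel₀ (by positivity) (sub_left_injective hj)
  rw [card_image_of_injective _ hinj, Int.card_Icc, Int.toNat_of_nonneg (by omega)]
  ring

theorem card_biUnion_image_Icc {m c : ℕ} (hc : m.Coprime c) {s : Finset ℕ} (hs : ∀ i ∈ s, i < m)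
    (lo hi : ℕ → ℤ) (hle : ∀ i ∈ s, lo i ≤ hi i) :
    (#(s.biUnion fun i => (Icc (lo i) (hi i - 1)).image fun j => (m : ℤ) * j - i * c) : ℤ) =
      ∑ i ∈ s, (hi i - lo i) := by
  rw [card_biUnion, Nat.cast_sum]
  · exact sum_congr rfl fun i hi =>
      card_image_Icc_mul_sub (Nat.zero_lt_of_lt (hs i hi)) _ (hle i hi)
  · intro i hi i' hi' hne
    simp only [Function.onFun, disjoint_left, mem_image, not_exists, not_and]
    rintro _ ⟨j, -, rfl⟩ j' - h
    exact hne (hc.eq_of_mul_sub_mul_eq (hs i hi) (hs i' hi') h.symm)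

theorem stmt_3_general (m r : ℕ) (hm : 2 ≤ m) (lam : Fin r → ℕ)
    (lam0 : ℕ) (hlam0 : lam0 = ∑ ℓ, lam ℓ)
    (hcop : Nat.gcd m lam0 = 1) :
    (((Finset.Ico 1 m).biUnion (fun i =>
        (Finset.Icc (⌈(i * lam0 : ℚ) / m⌉)
            ((∑ ℓ, ⌈(i * lam ℓ : ℚ) / m⌉) - 1)).image
          (fun j => (m : ℤ) * j - i * lam0))).card : ℚ) =
      (m * (r - 1) + 1 - ∑ ℓ, (Nat.gcd m (lam ℓ) : ℚ)) / 2 := by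
  have hm0 : 0 < m := by omega
  have hle : ∀ i ∈ Ico 1 m, ⌈(i * lam0 : ℚ) / m⌉ ≤ ∑ ℓ, ⌈(i * lam ℓ : ℚ) / m⌉ := fun i _ => by
    simpa [hlam0, mul_sum, sum_div] using Int.ceil_sum_le univ fun ℓ => (i * lam ℓ : ℚ) / m
  have hcard := card_biUnion_image_Icc hcop (fun i hi => (mem_Ico.1 hi).2) _ _ hle
  have hsum : 2 * ∑ i ∈ Ico 1 m, (∑ ℓ, ⌈(i * lam ℓ : ℚ) / m⌉ - ⌈(i * lam0 : ℚ) / m⌉) =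
      m * (r - 1) + 1 - ∑ ℓ, (m.gcd (lam ℓ) : ℤ) := by
    rw [sum_sub_distrib, sum_comm, mul_sub, mul_sum, two_mul_sum_ceil_div hm0, hcop]
    simp_rw [two_mul_sum_ceil_div hm0]
    rw [hlam0]
    push_cast
    simp only [sum_add_distrib, sum_sub_distrib, ← mul_sum, sum_const, card_univ, Fintype.card_fin]
    ring
  rw [eq_div_iff two_ne_zero, mul_comm]
  exact_mod_cast hcard ▸ hsum

theorem stmt_3 (m r : ℕ) (hm : 2 ≤ m) (hr : 1 ≤ r) (lam : Fin r → ℕ)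
    (hlam : ∀ ℓ, 1 ≤ lam ℓ ∧ lam ℓ < m)
    (lam0 : ℕ) (hlam0 : lam0 = ∑ ℓ, lam ℓ)
    (hcop : Nat.gcd m lam0 = 1) :
    (((Finset.Ico 1 m).biUnion (fun i =>
        (Finset.Icc (⌈(i * lam0 : ℚ) / m⌉)
            ((∑ ℓ, ⌈(i * lam ℓ : ℚ) / m⌉) - 1)).image
          (fun j => (m : ℤ) * j - i * lam0))).card : ℚ) =
      (m * (r - 1) + 1 - ∑ ℓ, (Nat.gcd m (lam ℓ) : ℚ)) / 2 :=
  stmt_3_general m r hm lam lam0 hlam0 hcop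
end

section
/- Let m ≥ 2 and r ≥ 2 be integers with gcd(m, r) = 1. Then the cardinality of the set G = { mj − i : 1 ≤ j ≤ r−1, ⌊jm/r⌋ + 1 ≤ i ≤ m−1 } equals (m−1)(r−1)/2. -/
/-!
Write `q j = ⌊j m / r⌋`. The `j`-th piece of `G` is `m j - i` for `q j < i < m`, so it lies in
`(m (j - 1), m j)`; the pieces are therefore disjoint and the `j`-th has `m - 1 - q j` elements.
Since `r ∤ j m` for `0 < j < r`, the number `j m / r` is not an integer, whence
`q j + q (r - j) = m - 1`. Pairing `j` with `r - j`, the piece sizes sum to `(m - 1)(r - 1) / 2`.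
-/

open Finset

theorem Int.floor_add_floor_intCast_sub {R : Type*} [Ring R] [LinearOrder R] [IsStrictOrderedRing R]
    [FloorRing R] {a : R} (ha : a ∉ Set.range Int.cast) (n : ℤ) :
    ⌊a⌋ + ⌊(n : R) - a⌋ = n - 1 := by
  rw [sub_eq_add_neg, Int.floor_intCast_add, Int.floor_neg,
    (Int.ceil_eq_floor_add_one_iff_notMem a).2 ha]
  ring

theorem Int.eq_of_mul_sub_eq_mul_sub {m j₁ j₂ i₁ i₂ : ℤ} (hi₁ : 0 ≤ i₁) (hi₁m : i₁ < m)
    (hi₂ : 0 ≤ i₂) (hi₂m : i₂ < m) (h : m * j₁ - i₁ = m * j₂ - i₂) : j₁ = j₂ := by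
  rcases lt_trichotomy j₁ j₂ with hlt | heq | hgt
  · nlinarith
  · exact heq
  · nlinarith

theorem Int.pairwiseDisjoint_image_mul_sub_Icc (m : ℤ) {a : ℕ → ℤ} (ha : ∀ j, 0 ≤ a j)
    (s : Set ℕ) :
    s.PairwiseDisjoint fun j : ℕ => (Icc (a j) (m - 1)).image (fun i => m * j - i) := by
  intro j₁ _ j₂ _ hne
  simp only [Function.onFun, disjoint_left, mem_image, mem_Icc]
  rintro _ ⟨i₁, ⟨hi₁, hi₁m⟩, rfl⟩ ⟨i₂, ⟨hi₂, hi₂m⟩, h⟩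
  have : (j₁ : ℤ) = j₂ :=
    Int.eq_of_mul_sub_eq_mul_sub ((ha j₁).trans hi₁) (by omega) ((ha j₂).trans hi₂) (by omega)
      h.symm
  exact hne (by exact_mod_cast this)

theorem Int.card_image_sub_Icc (a b c : ℤ) : #((Icc a b).image (c - ·)) = (b + 1 - a).toNat := by
  rw [card_image_of_injective _ sub_right_injective, Int.card_Icc]

theorem Finset.two_nsmul_sum_Ico_one_of_add_reflect {M : Type*} [AddCommMonoid M] {r : ℕ}
    {f : ℕ → M} {a : M} (h : ∀ j ∈ Ico 1 r, f j + f (r - j) = a) :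
    2 • ∑ j ∈ Ico 1 r, f j = (r - 1) • a := by
  have hreflect : ∑ j ∈ Ico 1 r, f (r - j) = ∑ j ∈ Ico 1 r, f j := by
    simpa using sum_Ico_reflect f 1 (Nat.le_succ r)
  rw [two_nsmul]
  nth_rw 2 [← hreflect]
  rw [← sum_add_distrib, sum_congr rfl h, sum_const, Nat.card_Ico]

section FloorMulDiv

variable {m r j : ℕ}

theorem floor_mul_div_lt (hm : 0 < m) (hjr : j < r) : ⌊(j * m : ℚ) / r⌋ < m := by
  have hr : (0 : ℚ) < r := by exact_mod_cast (Nat.zero_le j).trans_lt hjr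
  rw [Int.floor_lt, div_lt_iff₀ hr, Int.cast_natCast, mul_comm (m : ℚ)]
  gcongr

theorem mul_div_notMem_range_intCast (hcop : m.Coprime r) (hj : 0 < j) (hjr : j < r) :
    (j * m : ℚ) / r ∉ Set.range Int.cast := by
  rintro ⟨k, hk⟩
  have hr : (r : ℚ) ≠ 0 := by exact_mod_cast (hj.trans hjr).ne'
  rw [eq_div_iff hr] at hk
  have hdvd : r ∣ j * m :=
    Int.natCast_dvd_natCast.1 ⟨k, by exact_mod_cast hk.symm.trans (mul_comm _ _)⟩
  exact absurd (Nat.le_of_dvd hj (hcop.symm.dvd_of_dvd_mul_right hdvd)) (not_le.2 hjr)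

theorem floor_mul_div_add_floor_sub_mul_div (hcop : m.Coprime r) (hj : j ∈ Ico 1 r) :
    ⌊(j * m : ℚ) / r⌋ + ⌊((r - j : ℕ) * m : ℚ) / r⌋ = m - 1 := by
  obtain ⟨hj, hjr⟩ := mem_Ico.1 hj
  have hr : (r : ℚ) ≠ 0 := by exact_mod_cast (hj.trans_lt hjr).ne_bot
  have hsub : ((r - j : ℕ) * m : ℚ) / r = ((m : ℤ) : ℚ) - (j * m : ℚ) / r := by
    rw [Nat.cast_sub hjr.le]
    field_simp
    push_cast
    ring
  rw [hsub, Int.floor_add_floor_intCast_sub (mul_div_notMem_range_intCast hcop hj hjr)]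

end FloorMulDiv

theorem stmt_4 (m r : ℕ) (hm : 2 ≤ m) (hr : 2 ≤ r) (hcop : Nat.gcd m r = 1) :
    (((Finset.Ico 1 r).biUnion (fun j =>
        (Finset.Icc (⌊(j * m : ℚ) / r⌋ + 1) ((m : ℤ) - 1)).image
          (fun i => (m : ℤ) * j - i))).card : ℚ) =
      (m - 1) * (r - 1) / 2 := by
  set f : ℕ → ℤ := fun j => (m : ℤ) - 1 - ⌊(j * m : ℚ) / r⌋
  have hcard : (#((Ico 1 r).biUnion fun j =>
      (Icc (⌊(j * m : ℚ) / r⌋ + 1) ((m : ℤ) - 1)).image (fun i => (m : ℤ) * j - i)) : ℤ) =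
      ∑ j ∈ Ico 1 r, f j := by
    rw [card_biUnion (Int.pairwiseDisjoint_image_mul_sub_Icc _
      (fun j => by positivity) _), Nat.cast_sum]
    refine sum_congr rfl fun j hj => ?_
    rw [Int.card_image_sub_Icc, Int.toNat_of_nonneg]
    · ring
    · linarith [floor_mul_div_lt (m := m) (by omega) (mem_Ico.1 hj).2]
  have hsum : 2 • ∑ j ∈ Ico 1 r, f j = (r - 1) • ((m : ℤ) - 1) :=
    two_nsmul_sum_Ico_one_of_add_reflect fun j hj => by
      linarith [floor_mul_div_add_floor_sub_mul_div hcop hj]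
  rw [nsmul_eq_mul, nsmul_eq_mul, Nat.cast_sub (by omega : 1 ≤ r)] at hsum
  have hsumQ : (2 : ℚ) * (∑ j ∈ Ico 1 r, f j : ℤ) = ((r : ℚ) - 1) * ((m : ℚ) - 1) := by
    exact_mod_cast hsum
  rw [← Int.cast_natCast, hcard]
  linarith
end

section
/- Let P₁, P₂ be two distinct rational places of a function field and suppose the Weierstrass gap sets G(P₁) = {β₁ < ⋯ < β_g} and G(P₂) = {γ₁ < ⋯ < γ_g} each have g elements, with a permutation σ of {1,…,g} such that Γ(P₁,P₂) = {(β_i, γ_{σ(i)}) : i = 1,…,g} and the pure gap set is G₀(P₁,P₂) = {(β_i, γ_j) : i < σ⁻¹(j) and j < σ(i)}. Then G₀(P₁,P₂) = { glb(x, y) : x, y ∈ Γ(P₁,P₂) } \ Γ(P₁,P₂), where glb((a,b),(c,d)) = (min{a,c}, min{b,d}). -/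
/-!
Both coordinates are strictly monotone, so the glb of the points indexed by `i` and `k` is the
point with indices `(min i k, min (σ i) (σ k))`. It lies off the graph of `σ` exactly when `σ`
reverses the order of `i` and `k`, and the pairs `(min i k, min (σ i) (σ k))` arising from such
inversions are precisely the pairs `(i, j)` with `i < σ⁻¹ j` and `j < σ i`.
-/

open Function

variable {ι α β : Type*}

theorem Equiv.Perm.min_lt_symm_min_and_min_lt_of_ne [LinearOrder ι] (σ : Equiv.Perm ι) {i k : ι}
    (h : min (σ i) (σ k) ≠ σ (min i k)) :
    min i k < σ.symm (min (σ i) (σ k)) ∧ min (σ i) (σ k) < σ (min i k) := by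
  wlog hik : i ≤ k generalizing i k
  · rw [min_comm i k, min_comm (σ i)] at h ⊢
    exact this h (le_of_not_ge hik)
  rw [min_eq_left hik] at h ⊢
  have hσ : σ k < σ i := lt_of_not_ge fun hle ↦ h (min_eq_left hle)
  rw [min_eq_right hσ.le, Equiv.symm_apply_apply]
  exact ⟨hik.lt_of_ne (by rintro rfl; exact hσ.false), hσ⟩

theorem exists_prodMk_eq_iff {a : ι → α} {b : ι → β} (ha : Injective a) (hb : Injective b)
    (f : ι → ι) (i j : ι) : (∃ k, (a i, b j) = (a k, b (f k))) ↔ j = f i := by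
  constructor
  · rintro ⟨k, hk⟩
    obtain ⟨hi, hj⟩ := Prod.mk.inj hk
    rw [ha hi]
    exact hb hj
  · rintro rfl
    exact ⟨i, rfl⟩

theorem stmt_7 (g : ℕ) (β γ : Fin g → ℕ) (hβ : StrictMono β) (hγ : StrictMono γ)
    (σ : Equiv.Perm (Fin g)) :
    {p : ℕ × ℕ | ∃ i j : Fin g, i < σ.symm j ∧ j < σ i ∧ p = (β i, γ j)} =
      {p : ℕ × ℕ | ∃ x ∈ {p : ℕ × ℕ | ∃ i : Fin g, p = (β i, γ (σ i))},
          ∃ y ∈ {p : ℕ × ℕ | ∃ i : Fin g, p = (β i, γ (σ i))},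
          p = (min x.1 y.1, min x.2 y.2)} \
        {p : ℕ × ℕ | ∃ i : Fin g, p = (β i, γ (σ i))} := by
  ext p
  constructor
  · rintro ⟨i, j, hi, hj, rfl⟩
    refine ⟨⟨_, ⟨i, rfl⟩, _, ⟨σ.symm j, rfl⟩, ?_⟩,
      (exists_prodMk_eq_iff hβ.injective hγ.injective σ i j).not.2 hj.ne⟩
    rw [← hβ.monotone.map_min, ← hγ.monotone.map_min, min_eq_left hi.le,
      Equiv.apply_symm_apply, min_eq_right hj.le]
  · rintro ⟨⟨_, ⟨i, rfl⟩, _, ⟨k, rfl⟩, rfl⟩, hp⟩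
    rw [Set.mem_ofPred_eq, ← hβ.monotone.map_min, ← hγ.monotone.map_min,
      exists_prodMk_eq_iff hβ.injective hγ.injective] at hp
    obtain ⟨hi, hj⟩ := σ.min_lt_symm_min_and_min_lt_of_ne hp
    exact ⟨_, _, hi, hj, by rw [← hβ.monotone.map_min, ← hγ.monotone.map_min]⟩
end

section
/- Let q ≥ 2 and n ≥ 3 with n odd, M = (qⁿ − 2q^{n−1} + 1)/(q − 1). For integers a, b with 1 ≤ a ≤ q+1 and 0 ≤ b ≤ ⌈(qⁿ+1−2a)/(q²−q)⌉ − 1, setting i = aM + b, one has ⌈i(q²−q)/(qⁿ+1)⌉ = a(q−2) + 1. -/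
/-!
Multiplying out, `i (q² - q) = a (q - 2) (qⁿ + 1) + r` with `r = 2a + b (q² - q)`, and `a ≥ 1`
together with the bound on `b` give `0 < r < qⁿ + 1`, so the remainder `r / (qⁿ + 1)` rounds up to `1`.
-/

theorem Int.ceil_intCast_mul_add_div_eq {K : Type*} [Field K] [LinearOrder K] [IsStrictOrderedRing K]
    [FloorRing K] (k : ℤ) {N r : K} (hN : 0 < N) (hr : 0 < r) (hrN : r ≤ N) :
    ⌈((k : K) * N + r) / N⌉ = k + 1 := by
  have hfrac : ⌈r / N⌉ = 1 :=
    Int.ceil_eq_iff.mpr ⟨by simpa using div_pos hr hN, by simpa using (div_le_one hN).mpr hrN⟩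
  rw [add_div, mul_div_cancel_right₀ _ hN.ne', Int.ceil_intCast_add, hfrac]

theorem mul_lt_of_le_ceil_div_sub_one {K : Type*} [Field K] [LinearOrder K]
    [IsStrictOrderedRing K] [FloorRing K] {b : ℤ} {y D : K} (hD : 0 < D)
    (hb : b ≤ ⌈y / D⌉ - 1) : (b : K) * D < y := by
  rw [← lt_div_iff₀ hD, ← Int.lt_ceil]
  omega

theorem mul_sq_sub_self_eq {R : Type*} [CommRing R] (x M a b : R) (m : ℕ)
    (hM : (x - 1) * M = x ^ (m + 1) - 2 * x ^ m + 1) :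
    (a * M + b) * (x ^ 2 - x) = a * (x - 2) * (x ^ (m + 1) + 1) + (2 * a + b * (x ^ 2 - x)) := by
  linear_combination a * x * hM

theorem stmt_11_general (q n : ℕ) (hq : 2 ≤ q) (hn : 3 ≤ n)
    (M a b i : ℤ)
    (hM : ((q : ℤ) - 1) * M = (q : ℤ) ^ n - 2 * (q : ℤ) ^ (n - 1) + 1)
    (ha1 : 1 ≤ a)
    (hb1 : 0 ≤ b)
    (hb2 : b ≤ ⌈((q : ℚ) ^ n + 1 - 2 * (a : ℚ)) / ((q : ℚ) ^ 2 - q)⌉ - 1)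
    (hi : i = a * M + b) :
    ⌈((i : ℚ) * ((q : ℚ) ^ 2 - q)) / ((q : ℚ) ^ n + 1)⌉ = a * ((q : ℤ) - 2) + 1 := by
  obtain ⟨m, rfl⟩ : ∃ m, n = m + 1 := ⟨n - 1, by omega⟩
  have hq2 : (2 : ℚ) ≤ q := by exact_mod_cast hq
  have hD : (0 : ℚ) < (q : ℚ) ^ 2 - q := by nlinarith
  have hbD := mul_lt_of_le_ceil_div_sub_one hD hb2
  rw [Nat.add_sub_cancel] at hM
  have hsplit := mul_sq_sub_self_eq (q : ℚ) M a b m (by exact_mod_cast hM)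
  have ha : (1 : ℚ) ≤ a := by exact_mod_cast ha1
  have hb : (0 : ℚ) ≤ b := by exact_mod_cast hb1
  have hceil := Int.ceil_intCast_mul_add_div_eq (a * ((q : ℤ) - 2)) (N := (q : ℚ) ^ (m + 1) + 1)
    (r := 2 * a + b * ((q : ℚ) ^ 2 - q)) (by positivity) (by nlinarith) (by linarith)
  rw [hi, Int.cast_add, Int.cast_mul, hsplit]
  push_cast at hceil ⊢
  exact hceil

theorem stmt_11 (q n : ℕ) (hq : 2 ≤ q) (hn : 3 ≤ n) (hno : Odd n)
    (M a b i : ℤ)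
    (hM : ((q : ℤ) - 1) * M = (q : ℤ) ^ n - 2 * (q : ℤ) ^ (n - 1) + 1)
    (ha1 : 1 ≤ a) (ha2 : a ≤ (q : ℤ) + 1)
    (hb1 : 0 ≤ b)
    (hb2 : b ≤ ⌈((q : ℚ) ^ n + 1 - 2 * (a : ℚ)) / ((q : ℚ) ^ 2 - q)⌉ - 1)
    (hi : i = a * M + b) :
    ⌈((i : ℚ) * ((q : ℚ) ^ 2 - q)) / ((q : ℚ) ^ n + 1)⌉ = a * ((q : ℤ) - 2) + 1 :=
  stmt_11_general q n hq hn M a b i hM ha1 hb1 hb2 hi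
end

section
/- Let q ≥ 4 and n ≥ 3. If 1 ≤ a ≤ q/2 then ⌈(qⁿ+1−2a)/(q²−q)⌉ − 1 ≥ 2a(q^{n−1}−1)/(q²−1); and if q/2 + 1 ≤ a ≤ q+1 then 2a(q^{n−1}−1)/(q²−1) ≥ ⌈(qⁿ+1−2a)/(q²−q)⌉ − 1 = (q^{n−1}−q)/(q−1). -/
/-!
Write `N = q^(n-1)`, so `q^n = q N`, and let `t = (N - q)/(q - 1)`, an integer. Then
`(q^n + 1 - 2a)/(q² - q) = t + (q² + 1 - 2a)/(q² - q)`, and the second summand exceeds `1` when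
`2a ≤ q` but lies in `(0, 1]` when `q + 2 ≤ 2a ≤ 2q + 2`. So `⌈(q^n + 1 - 2a)/(q² - q)⌉ - 1` is at
least `t + 1 = (N - 1)/(q - 1)` in the first range and equals `t` in the second, and each case
ends with an elementary comparison with `2a(N - 1)/(q² - 1)`.
-/

section OrderedField

variable {K : Type*} [Field K] [LinearOrder K] [IsStrictOrderedRing K] {q a N : K}

lemma mul_add_div_sq_sub_self (hq : 1 < q) (c : K) :
    (q * N + c) / (q ^ 2 - q) = (N - q) / (q - 1) + (q ^ 2 + c) / (q ^ 2 - q) := by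
  have hq0 : q ≠ 0 := by positivity
  have hq1 : q - 1 ≠ 0 := sub_ne_zero.2 hq.ne'
  rw [show q ^ 2 - q = q * (q - 1) by ring]
  field_simp
  ring

lemma one_lt_sq_add_one_sub_div (hq : 1 < q) (ha : 2 * a ≤ q) :
    1 < (q ^ 2 + 1 - 2 * a) / (q ^ 2 - q) :=
  (one_lt_div (by nlinarith)).2 (by linarith)

lemma sq_add_one_sub_div_mem_Ioc (hq : 3 ≤ q) (ha₁ : q + 2 ≤ 2 * a) (ha₂ : a ≤ q + 1) :
    (q ^ 2 + 1 - 2 * a) / (q ^ 2 - q) ∈ Set.Ioc 0 1 :=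
  ⟨div_pos (by nlinarith) (by nlinarith), (div_le_one (by nlinarith)).2 (by linarith)⟩

lemma two_mul_mul_div_sq_sub_one_le (hq : 1 < q) (hN : 1 ≤ N) (ha : 2 * a ≤ q) :
    2 * a * (N - 1) / (q ^ 2 - 1) ≤ (N - q) / (q - 1) + 1 := by
  rw [div_add_one (sub_ne_zero.2 hq.ne'), div_le_div_iff₀ (by nlinarith) (by linarith)]
  nlinarith [mul_le_mul_of_nonneg_right ha (sub_nonneg.2 hN)]

lemma sub_div_sub_one_le_two_mul_mul_div (hq : 1 < q) (hN : 1 ≤ N) (ha : q + 2 ≤ 2 * a) :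
    (N - q) / (q - 1) ≤ 2 * a * (N - 1) / (q ^ 2 - 1) := by
  rw [div_le_div_iff₀ (by linarith) (by nlinarith)]
  have hq₀ : 0 ≤ q - 1 := sub_nonneg.2 hq.le
  nlinarith [mul_le_mul_of_nonneg_right (mul_le_mul_of_nonneg_right ha (sub_nonneg.2 hN)) hq₀,
    mul_nonneg (sub_nonneg.2 hN) hq₀, mul_nonneg (mul_nonneg hq₀ hq₀) (by linarith : 0 ≤ q + 1)]

end OrderedField

lemma exists_intCast_eq_pow_sub_div (K : Type*) [Field K] [CharZero K] {q : ℕ} (hq : 2 ≤ q)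
    (k : ℕ) : ∃ t : ℤ, (t : K) = ((q : K) ^ k - q) / (q - 1) := by
  obtain ⟨s, hs⟩ := sub_dvd_pow_sub_pow (q : ℤ) 1 k
  refine ⟨s - 1, ?_⟩
  have hq1 : (q : K) - 1 ≠ 0 := sub_ne_zero.2 (by norm_cast; omega)
  rw [eq_div_iff hq1]
  rw [one_pow] at hs
  have hs' : (q : K) ^ k - 1 = (q - 1) * s := by exact_mod_cast hs
  push_cast
  linear_combination -hs'

theorem stmt_12_general (q n : ℕ) (hq : 4 ≤ q) (hn : 3 ≤ n)
    (a : ℤ) :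
    ((1 ≤ a → 2 * a ≤ (q : ℤ) →
        2 * (a : ℚ) * ((q : ℚ) ^ (n - 1) - 1) / ((q : ℚ) ^ 2 - 1) ≤
          ((⌈((q : ℚ) ^ n + 1 - 2 * (a : ℚ)) / ((q : ℚ) ^ 2 - q)⌉ - 1 : ℤ) : ℚ)) ∧
      ((q : ℤ) + 2 ≤ 2 * a → a ≤ (q : ℤ) + 1 →
        ((⌈((q : ℚ) ^ n + 1 - 2 * (a : ℚ)) / ((q : ℚ) ^ 2 - q)⌉ - 1 : ℤ) : ℚ) ≤
            2 * (a : ℚ) * ((q : ℚ) ^ (n - 1) - 1) / ((q : ℚ) ^ 2 - 1) ∧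
          ((⌈((q : ℚ) ^ n + 1 - 2 * (a : ℚ)) / ((q : ℚ) ^ 2 - q)⌉ - 1 : ℤ) : ℚ) =
            ((q : ℚ) ^ (n - 1) - q) / ((q : ℚ) - 1))) := by
  have hq' : (4 : ℚ) ≤ q := by exact_mod_cast hq
  have hN : (1 : ℚ) ≤ (q : ℚ) ^ (n - 1) := one_le_pow₀ (by linarith)
  obtain ⟨t, ht⟩ := exists_intCast_eq_pow_sub_div ℚ (by omega : 2 ≤ q) (n - 1)
  have hceil : ⌈((q : ℚ) ^ n + 1 - 2 * (a : ℚ)) / ((q : ℚ) ^ 2 - q)⌉ =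
      t + ⌈((q : ℚ) ^ 2 + 1 - 2 * (a : ℚ)) / ((q : ℚ) ^ 2 - q)⌉ := by
    rw [← Nat.sub_one_add_one (by omega : n ≠ 0), pow_succ', add_sub_assoc,
      mul_add_div_sq_sub_self (by linarith), ← ht, Int.ceil_intCast_add, add_sub_assoc]
  refine ⟨fun h₁ h₂ => ?_, fun h₁ h₂ => ?_⟩
  · have hy : 1 < ⌈((q : ℚ) ^ 2 + 1 - 2 * (a : ℚ)) / ((q : ℚ) ^ 2 - q)⌉ :=
      Int.lt_ceil.2 (by
        exact_mod_cast one_lt_sq_add_one_sub_div (q := (q : ℚ)) (a := a) (by linarith)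
          (by exact_mod_cast h₂))
    have hstep : t + 1 ≤ ⌈((q : ℚ) ^ n + 1 - 2 * (a : ℚ)) / ((q : ℚ) ^ 2 - q)⌉ - 1 := by
      rw [hceil]; omega
    calc _ ≤ (t : ℚ) + 1 :=
          ht ▸ two_mul_mul_div_sq_sub_one_le (by linarith) hN (by exact_mod_cast h₂)
      _ ≤ _ := by exact_mod_cast hstep
  · have hy : ⌈((q : ℚ) ^ 2 + 1 - 2 * (a : ℚ)) / ((q : ℚ) ^ 2 - q)⌉ = 1 :=
      Int.ceil_eq_iff.2 (by
        simpa using sq_add_one_sub_div_mem_Ioc (q := (q : ℚ)) (a := a) (by linarith)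
          (by exact_mod_cast h₁) (by exact_mod_cast h₂))
    rw [hceil, hy, add_sub_cancel_right, ht]
    exact ⟨sub_div_sub_one_le_two_mul_mul_div (by linarith) hN (by exact_mod_cast h₁), rfl⟩

theorem stmt_12 (q n : ℕ) (hq : 4 ≤ q) (hqe : Even q) (hn : 3 ≤ n) (hno : Odd n)
    (a : ℤ) :
    ((1 ≤ a → 2 * a ≤ (q : ℤ) →
        2 * (a : ℚ) * ((q : ℚ) ^ (n - 1) - 1) / ((q : ℚ) ^ 2 - 1) ≤
          ((⌈((q : ℚ) ^ n + 1 - 2 * (a : ℚ)) / ((q : ℚ) ^ 2 - q)⌉ - 1 : ℤ) : ℚ)) ∧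
      ((q : ℤ) + 2 ≤ 2 * a → a ≤ (q : ℤ) + 1 →
        ((⌈((q : ℚ) ^ n + 1 - 2 * (a : ℚ)) / ((q : ℚ) ^ 2 - q)⌉ - 1 : ℤ) : ℚ) ≤
            2 * (a : ℚ) * ((q : ℚ) ^ (n - 1) - 1) / ((q : ℚ) ^ 2 - 1) ∧
          ((⌈((q : ℚ) ^ n + 1 - 2 * (a : ℚ)) / ((q : ℚ) ^ 2 - q)⌉ - 1 : ℤ) : ℚ) =
            ((q : ℚ) ^ (n - 1) - q) / ((q : ℚ) - 1))) :=
  stmt_12_general q n hq hn a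
end

section
/- Let m = qⁿ + 1 with q ≥ 4 even and n ≥ 3 odd, s = (qⁿ+1)/(q+1), and define Γ∞ = {(mj₁ − i(q²−q), i + mj₂) : 1 ≤ i ≤ m−1, j₁ ≥ ⌈i(q²−q)/m⌉, j₂ ≥ 0, j₁ + j₂ = (q−2)⌈i/s⌉ + 1}. Then for every a with 0 ≤ a ≤ s−1, the pair ((qⁿ+1)(q−1) − (s−a)(q²−q), s−a) belongs to Γ∞. -/
/-!
Take `i = s - a`, `j₁ = q - 1`, `j₂ = 0`. Since `0 < i ≤ s` we have `⌈i / s⌉ = 1`, so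
`j₁ + j₂ = (q - 2) * 1 + 1`; and `i ≤ s` gives `i (q² - q) ≤ (q - 1)(q + 1) s = (q - 1)(qⁿ + 1)`,
which is the lower bound on `j₁`.
-/

theorem Int.ceil_div_eq_one {α : Type*} [Field α] [LinearOrder α] [IsStrictOrderedRing α]
    [FloorRing α] {a b : α} (ha : 0 < a) (hab : a ≤ b) : ⌈a / b⌉ = 1 := by
  have hb : 0 < b := ha.trans_le hab
  rw [Int.ceil_eq_iff, Int.cast_one, sub_self]
  exact ⟨div_pos ha hb, (div_le_one hb).2 hab⟩

theorem mul_sub_div_mul_le_sub_one {α : Type*} [Field α] [LinearOrder α] [IsStrictOrderedRing α]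
    {i q s : α} (hi : 0 ≤ i) (his : i ≤ s) (hq : 1 ≤ q) :
    i * (q ^ 2 - q) / ((q + 1) * s) ≤ q - 1 := by
  rcases hi.eq_or_lt with rfl | hi
  · simp [hq]
  have hs : 0 < (q + 1) * s := by nlinarith
  rw [div_le_iff₀ hs]
  have hq' : 0 ≤ q * (q - 1) := mul_nonneg (by linarith) (by linarith)
  nlinarith [mul_le_mul_of_nonneg_right his hq']

theorem stmt_14_general (q n : ℕ) (hq : 4 ≤ q)
    (s : ℤ) (hs : ((q : ℤ) + 1) * s = (q : ℤ) ^ n + 1)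
    (a : ℤ) (ha1 : 0 ≤ a) (ha2 : a ≤ s - 1) :
    ((((q : ℤ) ^ n + 1) * ((q : ℤ) - 1) - (s - a) * ((q : ℤ) ^ 2 - q), s - a) ∈
      {p : ℤ × ℤ | ∃ i j₁ j₂ : ℤ, 1 ≤ i ∧ i ≤ (q : ℤ) ^ n + 1 - 1 ∧
        ⌈((i : ℚ) * ((q : ℚ) ^ 2 - q)) / ((q : ℚ) ^ n + 1)⌉ ≤ j₁ ∧ 0 ≤ j₂ ∧
        j₁ + j₂ = ((q : ℤ) - 2) * ⌈(i : ℚ) / (s : ℚ)⌉ + 1 ∧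
        p = (((q : ℤ) ^ n + 1) * j₁ - i * ((q : ℤ) ^ 2 - q),
              i + ((q : ℤ) ^ n + 1) * j₂)}) := by
  have hq1 : (1 : ℤ) ≤ q := by omega
  have hs_le : s ≤ (q : ℤ) ^ n := by nlinarith [one_le_pow₀ (n := n) hq1]
  have hsQ : ((q : ℚ) + 1) * s = (q : ℚ) ^ n + 1 := by exact_mod_cast hs
  refine ⟨s - a, q - 1, 0, by omega, by omega, ?_, le_rfl, ?_, by simp⟩
  · rw [Int.ceil_le, ← hsQ]
    push_cast
    exact mul_sub_div_mul_le_sub_one (by exact_mod_cast (by omega : (0 : ℤ) ≤ s - a))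
      (by exact_mod_cast (by omega : s - a ≤ s)) (by exact_mod_cast hq1)
  · rw [Int.ceil_div_eq_one (by exact_mod_cast (by omega : (0 : ℤ) < s - a))
      (by exact_mod_cast (by omega : s - a ≤ s))]
    ring

theorem stmt_14 (q n : ℕ) (hq : 4 ≤ q) (hqe : Even q) (hn : 3 ≤ n) (hno : Odd n)
    (s : ℤ) (hs : ((q : ℤ) + 1) * s = (q : ℤ) ^ n + 1)
    (a : ℤ) (ha1 : 0 ≤ a) (ha2 : a ≤ s - 1) :
    ((((q : ℤ) ^ n + 1) * ((q : ℤ) - 1) - (s - a) * ((q : ℤ) ^ 2 - q), s - a) ∈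
      {p : ℤ × ℤ | ∃ i j₁ j₂ : ℤ, 1 ≤ i ∧ i ≤ (q : ℤ) ^ n + 1 - 1 ∧
        ⌈((i : ℚ) * ((q : ℚ) ^ 2 - q)) / ((q : ℚ) ^ n + 1)⌉ ≤ j₁ ∧ 0 ≤ j₂ ∧
        j₁ + j₂ = ((q : ℤ) - 2) * ⌈(i : ℚ) / (s : ℚ)⌉ + 1 ∧
        p = (((q : ℤ) ^ n + 1) * j₁ - i * ((q : ℤ) ^ 2 - q),
              i + ((q : ℤ) ^ n + 1) * j₂)}) :=
  stmt_14_general q n hq s hs a ha1 ha2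
end

section
/- Let q ≥ 4 be even and n ≥ 3 odd, s = (qⁿ+1)/(q+1), g = ((qⁿ+1)(q−1) − q² + q + 1)/2 (an integer). For a = ⌊(q^{n+2} − 2q^{n+1} − q³ + q² + 1)/(2q³ − 3q − 1)⌋ + 1, the degree 2(q^{n+1} − qⁿ + q − 2) − (s − a)(2q² − 2q − 1) is strictly greater than 2g − 2 = (q^{n+2} − qⁿ − q³ + q² − 2)/(q+1). -/
/-! Multiplying by `q + 1` and eliminating `s` and `g` through their defining relations, the
difference between the degree and `2g - 2` becomes `a (2q³ - 3q - 1) - N` with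
`N = q^{n+2} - 2q^{n+1} - q³ + q² + 1`; the choice `a = ⌊N / (2q³ - 3q - 1)⌋ + 1` makes this
positive. -/

lemma lt_floor_div_add_one_mul {K : Type*} [Field K] [LinearOrder K] [IsStrictOrderedRing K]
    [FloorRing K] (N : K) {D : K} (hD : 0 < D) : N < ((⌊N / D⌋ + 1 : ℤ) : K) * D := by
  rw [← div_lt_iff₀ hD]
  push_cast
  exact Int.lt_floor_add_one _

section GenusIdentities

variable {R : Type*} [CommRing R] {q g : R} (n : ℕ)

lemma mul_two_genus_sub_two (hg : 2 * g = (q ^ n + 1) * (q - 1) - q ^ 2 + q + 1) :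
    (q + 1) * (2 * g - 2) = q ^ (n + 2) - q ^ n - q ^ 3 + q ^ 2 - 2 := by
  linear_combination (q + 1) * hg

lemma mul_degree_sub_mul_two_genus {s : R} (a : R) (hs : (q + 1) * s = q ^ n + 1)
    (hg : 2 * g = (q ^ n + 1) * (q - 1) - q ^ 2 + q + 1) :
    (q + 1) * (2 * (q ^ (n + 1) - q ^ n + q - 2) - (s - a) * (2 * q ^ 2 - 2 * q - 1))
        - (q + 1) * (2 * g - 2) =
      a * (2 * q ^ 3 - 3 * q - 1) - (q ^ (n + 2) - 2 * q ^ (n + 1) - q ^ 3 + q ^ 2 + 1) := by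
  linear_combination (-(2 * q ^ 2 - 2 * q - 1)) * hs - (q + 1) * hg

end GenusIdentities

theorem stmt_18_general (q n : ℕ) (hq : 4 ≤ q)
    (s g a : ℤ)
    (hs : ((q : ℤ) + 1) * s = (q : ℤ) ^ n + 1)
    (hg : 2 * g = ((q : ℤ) ^ n + 1) * ((q : ℤ) - 1) - (q : ℤ) ^ 2 + q + 1)
    (ha : a = ⌊((q : ℚ) ^ (n + 2) - 2 * (q : ℚ) ^ (n + 1) - (q : ℚ) ^ 3 + (q : ℚ) ^ 2 + 1) /
        (2 * (q : ℚ) ^ 3 - 3 * (q : ℚ) - 1)⌋ + 1) :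
    2 * g - 2 <
        2 * ((q : ℤ) ^ (n + 1) - (q : ℤ) ^ n + q - 2) - (s - a) * (2 * (q : ℤ) ^ 2 - 2 * q - 1) ∧
      ((2 * g - 2 : ℤ) : ℚ) =
        ((q : ℚ) ^ (n + 2) - (q : ℚ) ^ n - (q : ℚ) ^ 3 + (q : ℚ) ^ 2 - 2) / ((q : ℚ) + 1) := by
  have hqQ : (4 : ℚ) ≤ q := by exact_mod_cast hq
  have hD : (0 : ℚ) < 2 * (q : ℚ) ^ 3 - 3 * q - 1 := by nlinarith
  have hN : (q : ℤ) ^ (n + 2) - 2 * (q : ℤ) ^ (n + 1) - (q : ℤ) ^ 3 + (q : ℤ) ^ 2 + 1 <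
      a * (2 * (q : ℤ) ^ 3 - 3 * q - 1) := by
    have h := lt_floor_div_add_one_mul
      ((q : ℚ) ^ (n + 2) - 2 * (q : ℚ) ^ (n + 1) - (q : ℚ) ^ 3 + (q : ℚ) ^ 2 + 1) hD
    rw [← ha] at h
    exact_mod_cast h
  have hq1 : (0 : ℤ) < q + 1 := by positivity
  refine ⟨lt_of_mul_lt_mul_left ?_ hq1.le, ?_⟩
  · linarith [mul_degree_sub_mul_two_genus n a hs hg]
  · rw [eq_div_iff (by positivity), mul_comm]
    exact_mod_cast mul_two_genus_sub_two n hg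

theorem stmt_18 (q n : ℕ) (hq : 4 ≤ q) (hqe : Even q) (hn : 3 ≤ n) (hno : Odd n)
    (s g a : ℤ)
    (hs : ((q : ℤ) + 1) * s = (q : ℤ) ^ n + 1)
    (hg : 2 * g = ((q : ℤ) ^ n + 1) * ((q : ℤ) - 1) - (q : ℤ) ^ 2 + q + 1)
    (ha : a = ⌊((q : ℚ) ^ (n + 2) - 2 * (q : ℚ) ^ (n + 1) - (q : ℚ) ^ 3 + (q : ℚ) ^ 2 + 1) /
        (2 * (q : ℚ) ^ 3 - 3 * (q : ℚ) - 1)⌋ + 1) :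
    2 * g - 2 <
        2 * ((q : ℤ) ^ (n + 1) - (q : ℤ) ^ n + q - 2) - (s - a) * (2 * (q : ℤ) ^ 2 - 2 * q - 1) ∧
      ((2 * g - 2 : ℤ) : ℚ) =
        ((q : ℚ) ^ (n + 2) - (q : ℚ) ^ n - (q : ℚ) ^ 3 + (q : ℚ) ^ 2 - 2) / ((q : ℚ) + 1) :=
  stmt_18_general q n hq s g a hs hg ha
end
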